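/- arXiv:math/0207245 — 2 statements merged into one kernel-verified Lean document; each statement's English description precedes it below -/
import Mathlib

section
/- Let q = p^t be a prime power, G a group of order q^2 generated by two subgroups E and E' each of order q with E ∩ E' = {1}. Suppose a cyclic group C of order q−1 acts on G by automorphisms, stabilizing E and E', such that the induced action on E \ {1} and on E' \ {1} is simply transitive. Then G is the internal direct product of E and E' (i.e., every element of E commutes with every element of E' and G = E × E'). -/
/-!
Let `Z` be the centre of `G`; it is invariant under `C`. Since `C` is transitive on the nontrivial
elements of `E`, either `E ≤ Z` or `Z ∩ E = 1`, and likewise for `E'`; if `E ≤ Z` or `E' ≤ Z` we are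
done. Otherwise take `z ≠ 1` in `Z` (a nontrivial `p`-group has nontrivial centre) and factor
`z = x y` with `x ∈ E`, `y ∈ E'`; then `x ≠ 1`. By uniqueness of the factorisation, an element of `C`
fixing `z` fixes `x`, so it is trivial. The orbit of `z` thus consists of `q - 1` nontrivial central
elements, so `|Z| ≥ q`, and `Z ∩ E = 1` forces `Z E = G`. Hence `E` is normal, symmetrically so is `E'`,
and disjoint normal subgroups commute.
-/

section

open Subgroup

variable {G C : Type*} [Group G] [Group C]

namespace Subgroup

lemma mul_bijective_of_disjoint_of_card_le [Finite G] {H K : Subgroup G} (hHK : Disjoint H K)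
    (hcard : Nat.card G ≤ Nat.card H * Nat.card K) :
    Function.Bijective (fun g => g.1 * g.2 : H × K → G) :=
  (mul_injective_of_disjoint hHK).bijective_of_nat_card_le (by rwa [Nat.card_prod])

lemma sup_eq_top_of_disjoint_of_card_le [Finite G] {H K : Subgroup G} (hHK : Disjoint H K)
    (hcard : Nat.card G ≤ Nat.card H * Nat.card K) : H ⊔ K = ⊤ := by
  refine eq_top_iff.mpr fun g _ => ?_
  obtain ⟨⟨h, k⟩, rfl⟩ := (mul_bijective_of_disjoint_of_card_le hHK hcard).2 g
  exact mul_mem (mem_sup_left h.2) (mem_sup_right k.2)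

lemma normal_of_center_sup_eq_top {H : Subgroup G} (h : center G ⊔ H = ⊤) : H.Normal :=
  normalizer_eq_top_iff.mp <| eq_top_iff.mpr <| h ▸ sup_le (center_le_normalizer _) le_normalizer

lemma normal_of_disjoint_center_of_card_le [Finite G] {K : Subgroup G}
    (hZK : Disjoint (center G) K) (hcard : Nat.card G ≤ Nat.card (center G) * Nat.card K) :
    K.Normal :=
  normal_of_center_sup_eq_top (sup_eq_top_of_disjoint_of_card_le hZK hcard)

lemma mulAut_apply_mem_center (α : MulAut G) {z : G} (hz : z ∈ center G) : α z ∈ center G :=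
  (centerCharacteristic.fixed α).ge hz

end Subgroup

namespace MulAut

lemma apply_eq_self_of_apply_mul_eq_self {E E' : Subgroup G} (hdisj : Disjoint E E')
    (α : MulAut G) (hαE : ∀ x ∈ E, α x ∈ E) (hαE' : ∀ y ∈ E', α y ∈ E') {x y : G}
    (hx : x ∈ E) (hy : y ∈ E') (hxy : α (x * y) = x * y) : α x = x := by
  have h := mul_injective_of_disjoint hdisj
    (a₁ := (⟨α x, hαE x hx⟩, ⟨α y, hαE' y hy⟩)) (a₂ := (⟨x, hx⟩, ⟨y, hy⟩)) (by simpa using hxy)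
  exact congrArg (fun g => (g.1 : G)) h

end MulAut

section Action

variable (φ : C →* MulAut G)

lemma le_or_disjoint_of_transitive {K E : Subgroup G} (hK : ∀ c, ∀ x ∈ K, φ c x ∈ K)
    (htrans : ∀ x ∈ E, ∀ y ∈ E, x ≠ 1 → y ≠ 1 → ∃ c, φ c x = y) : E ≤ K ∨ Disjoint K E := by
  rcases (K ⊓ E).bot_or_exists_ne_one with h | ⟨z, ⟨hzK, hzE⟩, hz⟩
  · exact .inr (disjoint_iff.mpr h)
  refine .inl fun x hx => ?_
  rcases eq_or_ne x 1 with rfl | hx1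
  · exact one_mem K
  obtain ⟨c, rfl⟩ := htrans z hzE x hx hz hx1
  exact hK c z hzK

lemma injective_apply_mul_of_free {E E' : Subgroup G} (hdisj : Disjoint E E')
    (hstabE : ∀ c : C, ∀ x ∈ E, φ c x ∈ E) (hstabE' : ∀ c : C, ∀ y ∈ E', φ c y ∈ E')
    {x y : G} (hx : x ∈ E) (hy : y ∈ E') (hfree : ∀ c, φ c x = x → c = 1) :
    Function.Injective fun c => φ c (x * y) := by
  intro c c' (h : φ c (x * y) = φ c' (x * y))
  have hfix : φ (c⁻¹ * c') (x * y) = x * y := by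
    rw [φ.map_mul, MulAut.mul_apply, ← h, φ.map_inv, MulAut.inv_apply_self]
  exact inv_mul_eq_one.mp <| hfree _ <|
    MulAut.apply_eq_self_of_apply_mul_eq_self hdisj _ (hstabE _) (hstabE' _) hx hy hfix

lemma card_add_one_le_of_injective_orbit {H : Subgroup G} [Finite H]
    (hH : ∀ c, ∀ x ∈ H, φ c x ∈ H) {z : G} (hzH : z ∈ H) (hz : z ≠ 1)
    (hinj : Function.Injective fun c => φ c z) : Nat.card C + 1 ≤ Nat.card H := by
  let f : C ↪ H := ⟨fun c => ⟨φ c z, hH c z hzH⟩, fun c c' h => hinj congr(($h : G))⟩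
  have : Finite C := Finite.of_injective f f.injective
  have h1 : (1 : H) ∉ Set.range f := by
    rintro ⟨c, hc⟩
    exact hz <| (MulEquiv.map_eq_one_iff (φ c)).mp congr(($hc : G))
  exact Finite.card_option (α := C) ▸ Nat.card_le_card_of_injective _ (f.optionElim 1 h1).injective

lemma card_add_one_le_card_center [Finite G] [Nontrivial (center G)] {E E' : Subgroup G}
    (hdisj : Disjoint E E') (hEE' : Function.Surjective (fun g => g.1 * g.2 : E × E' → G))
    (hstabE : ∀ c : C, ∀ x ∈ E, φ c x ∈ E) (hstabE' : ∀ c : C, ∀ y ∈ E', φ c y ∈ E')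
    (hfree : ∀ x ∈ E, x ≠ 1 → ∀ c, φ c x = x → c = 1) (hZE' : Disjoint (center G) E') :
    Nat.card C + 1 ≤ Nat.card (center G) := by
  obtain ⟨z, hz⟩ := exists_ne (1 : center G)
  obtain ⟨⟨x, y⟩, hxy⟩ := hEE' z
  have hx : (x : G) ≠ 1 := by
    intro hx
    have hzE' : (z : G) ∈ E' := by rw [← hxy]; simp [hx]
    exact hz <| Subtype.ext <| disjoint_iff_inf_le.mp hZE' ⟨z.2, hzE'⟩
  refine card_add_one_le_of_injective_orbit φ (fun c _ => mulAut_apply_mem_center (φ c))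
    z.2 (fun h => hz (Subtype.ext h)) ?_
  rw [← hxy]
  exact injective_apply_mul_of_free φ hdisj hstabE hstabE' x.2 y.2 (hfree x x.2 hx)

end Action

end

theorem stmt_0_general (p t q : ℕ) (hp : p.Prime) (ht : 1 ≤ t) (hq : q = p ^ t)
    (G : Type*) [Group G] [Finite G] (hG : Nat.card G = q ^ 2)
    (E E' : Subgroup G) (hE : Nat.card E = q) (hE' : Nat.card E' = q)
    (hdisj : E ⊓ E' = ⊥)
    (C : Type*) [Group C] (hC : Nat.card C = q - 1)
    (φ : C →* MulAut G)
    (hstabE : ∀ c : C, ∀ x ∈ E, φ c x ∈ E)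
    (hstabE' : ∀ c : C, ∀ x ∈ E', φ c x ∈ E')
    (htransE : ∀ x ∈ E, ∀ y ∈ E, x ≠ 1 → y ≠ 1 → ∃! c : C, φ c x = y)
    (htransE' : ∀ x ∈ E', ∀ y ∈ E', x ≠ 1 → y ≠ 1 → ∃! c : C, φ c x = y) :
    (∀ x ∈ E, ∀ y ∈ E', Commute x y) ∧ Nonempty (G ≃* E × E') := by
  have : Fact p.Prime := ⟨hp⟩
  have hq1 : 1 < q := hq ▸ Nat.one_lt_pow (by omega) hp.one_lt
  have hdisj : Disjoint E E' := disjoint_iff.mpr hdisj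
  have hEE' := Subgroup.mul_bijective_of_disjoint_of_card_le hdisj (by rw [hG, hE, hE', sq])
  have hZ (c : C) : ∀ x ∈ Subgroup.center G, φ c x ∈ Subgroup.center G :=
    fun _ => Subgroup.mulAut_apply_mem_center (φ c)
  have hcomm : ∀ x ∈ E, ∀ y ∈ E', Commute x y := by
    rcases le_or_disjoint_of_transitive φ hZ fun x hx y hy hx1 hy1 =>
      (htransE x hx y hy hx1 hy1).exists with hEZ | hZE
    · exact fun x hx y _ => (Subgroup.mem_center_iff.mp (hEZ hx) y).symm
    rcases le_or_disjoint_of_transitive φ hZ fun x hx y hy hx1 hy1 =>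
      (htransE' x hx y hy hx1 hy1).exists with hE'Z | hZE'
    · exact fun x _ y hy => Subgroup.mem_center_iff.mp (hE'Z hy) x
    have : Nontrivial G := Finite.one_lt_card_iff_nontrivial.mp (by rw [hG]; nlinarith)
    have : Nontrivial (Subgroup.center G) :=
      (IsPGroup.of_card (p := p) (by rw [hG, hq, ← pow_mul])).center_nontrivial
    have hcardZ : Nat.card C + 1 ≤ Nat.card (Subgroup.center G) :=
      card_add_one_le_card_center φ hdisj hEE'.2 hstabE hstabE'
        (fun x hx hx1 c hc => (htransE x hx x hx hx1 hx1).unique hc (by simp)) hZE'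
    have hcardG {K : Subgroup G} (hK : Nat.card K = q) :
        Nat.card G ≤ Nat.card (Subgroup.center G) * Nat.card K := by
      rw [hG, hK, sq]
      exact Nat.mul_le_mul_right q (by omega)
    exact fun x hx y hy => Subgroup.commute_of_normal_of_disjoint E E'
      (Subgroup.normal_of_disjoint_center_of_card_le hZE (hcardG hE))
      (Subgroup.normal_of_disjoint_center_of_card_le hZE' (hcardG hE')) hdisj x y hx hy
  exact ⟨hcomm, ⟨(MulEquiv.ofBijective
    (MonoidHom.noncommCoprod E.subtype E'.subtype fun a b => hcomm a a.2 b b.2) hEE').symm⟩⟩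

/-- The direct-product lemma: a group of order `q²` generated by two disjoint
subgroups of order `q`, with a cyclic group of order `q - 1` acting by automorphisms
stabilizing both and acting simply transitively on their nontrivial elements,
is the internal direct product of the two subgroups. -/
theorem stmt_0 (p t q : ℕ) (hp : p.Prime) (ht : 1 ≤ t) (hq : q = p ^ t)
    (G : Type*) [Group G] [Finite G] (hG : Nat.card G = q ^ 2)
    (E E' : Subgroup G) (hE : Nat.card E = q) (hE' : Nat.card E' = q)
    (hdisj : E ⊓ E' = ⊥) (hgen : E ⊔ E' = ⊤)
    (C : Type*) [Group C] [IsCyclic C] (hC : Nat.card C = q - 1)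
    (φ : C →* MulAut G)
    (hstabE : ∀ c : C, ∀ x ∈ E, φ c x ∈ E)
    (hstabE' : ∀ c : C, ∀ x ∈ E', φ c x ∈ E')
    (htransE : ∀ x ∈ E, ∀ y ∈ E, x ≠ 1 → y ≠ 1 → ∃! c : C, φ c x = y)
    (htransE' : ∀ x ∈ E', ∀ y ∈ E', x ≠ 1 → y ≠ 1 → ∃! c : C, φ c x = y) :
    (∀ x ∈ E, ∀ y ∈ E', Commute x y) ∧ Nonempty (G ≃* E × E') :=
  stmt_0_general p t q hp ht hq G hG E E' hE hE' hdisj C hC φ hstabE hstabE' htransE htransE'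
end

section
/- Under the hypotheses of the direct-product lemma, the center of G contains no nontrivial fixed point of the C-action: if z ∈ Z(G) is fixed by some nontrivial element of C, then z = 1. -/
/-! Write `z = a * b` with `a ∈ E`, `b ∈ E'`. An automorphism fixing `z` and stabilizing `E` and `E'`
maps this factorization to another one, so by uniqueness it fixes `a` and `b`. Since `C` acts
simply transitively on `E \ {1}` and on `E' \ {1}`, only `1 ∈ C` fixes a nontrivial element of
either subgroup; hence `a = b = 1`. -/

section
variable {G : Type*} [Group G]

theorem MulAut.apply_factors_eq_of_apply_eq_self {E E' : Subgroup G} (f : MulAut G)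
    (hfE : ∀ x ∈ E, f x ∈ E) (hfE' : ∀ x ∈ E', f x ∈ E') {z : G} {a : E} {b : E'}
    (hab : z = a * b) (huniq : ∀ w : E × E', z = w.1 * w.2 → w = (a, b)) (hfz : f z = z) :
    f a = a ∧ f b = b := by
  have hfab : z = (⟨f a, hfE a a.2⟩ : E) * (⟨f b, hfE' b b.2⟩ : E') := by
    rw [← hfz, hab, map_mul]
  have h := huniq (⟨f a, hfE a a.2⟩, ⟨f b, hfE' b b.2⟩) hfab
  exact ⟨congrArg (fun w : E × E' => (w.1 : G)) h, congrArg (fun w : E × E' => (w.2 : G)) h⟩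

theorem MonoidHom.eq_one_of_apply_eq_self {C : Type*} [Group C] {φ : C →* MulAut G}
    {E : Subgroup G} (hfree : ∀ x ∈ E, x ≠ 1 → ∃! c : C, φ c x = x) {c : C} (hc : c ≠ 1)
    {x : G} (hx : x ∈ E) (hfix : φ c x = x) : x = 1 := by
  by_contra hx1
  exact hc ((hfree x hx hx1).unique hfix (by simp))

end

theorem stmt_1_general
    (G : Type*) [Group G]
    (E E' : Subgroup G)
    (hprod : ∀ z : G, ∃! w : E × E', z = (w.1 : G) * (w.2 : G))
    (C : Type*) [Group C]
    (φ : C →* MulAut G)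
    (hstabE : ∀ c : C, ∀ x ∈ E, φ c x ∈ E)
    (hstabE' : ∀ c : C, ∀ x ∈ E', φ c x ∈ E')
    (htransE : ∀ x ∈ E, ∀ y ∈ E, x ≠ 1 → y ≠ 1 → ∃! c : C, φ c x = y)
    (htransE' : ∀ x ∈ E', ∀ y ∈ E', x ≠ 1 → y ≠ 1 → ∃! c : C, φ c x = y) :
    ∀ z ∈ Subgroup.center G, ∀ c : C, c ≠ 1 → φ c z = z → z = 1 := by
  intro z _ c hc hfix
  obtain ⟨⟨a, b⟩, hab, huniq⟩ := hprod z
  obtain ⟨hfa, hfb⟩ :=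
    (φ c).apply_factors_eq_of_apply_eq_self (hstabE c) (hstabE' c) hab huniq hfix
  have ha : (a : G) = 1 :=
    φ.eq_one_of_apply_eq_self (fun x hx hx1 => htransE x hx x hx hx1 hx1) hc a.2 hfa
  have hb : (b : G) = 1 :=
    φ.eq_one_of_apply_eq_self (fun x hx hx1 => htransE' x hx x hx hx1 hx1) hc b.2 hfb
  rw [hab, ha, hb, one_mul]

/-- Under the hypotheses of the direct-product lemma, no nontrivial central element
is fixed by a nontrivial element of the cyclic group acting. -/
theorem stmt_1 (p t q : ℕ) (hp : p.Prime) (ht : 1 ≤ t) (hq : q = p ^ t)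
    (G : Type*) [Group G] [Finite G] (hG : Nat.card G = q ^ 2)
    (E E' : Subgroup G) (hE : Nat.card E = q) (hE' : Nat.card E' = q)
    (hdisj : E ⊓ E' = ⊥) (hgen : E ⊔ E' = ⊤)
    (hprod : ∀ z : G, ∃! w : E × E', z = (w.1 : G) * (w.2 : G))
    (C : Type*) [Group C] [IsCyclic C] (hC : Nat.card C = q - 1)
    (φ : C →* MulAut G)
    (hstabE : ∀ c : C, ∀ x ∈ E, φ c x ∈ E)
    (hstabE' : ∀ c : C, ∀ x ∈ E', φ c x ∈ E')
    (htransE : ∀ x ∈ E, ∀ y ∈ E, x ≠ 1 → y ≠ 1 → ∃! c : C, φ c x = y)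
    (htransE' : ∀ x ∈ E', ∀ y ∈ E', x ≠ 1 → y ≠ 1 → ∃! c : C, φ c x = y) :
    ∀ z ∈ Subgroup.center G, ∀ c : C, c ≠ 1 → φ c z = z → z = 1 :=
  stmt_1_general G E E' hprod C φ hstabE hstabE' htransE htransE'
end
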